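/- (Correctness of SI-FEIP decryption.) Let G be a commutative group, g an element of G, η a natural number, s, x, y : Fin η → ℤ, and r : ℤ. Define the public key components h_i = g^{s_i}, the ciphertext ct_0 = g^r and ct_i = h_i^r · g^{x_i} for each i, and the functional key sk = ∑_i y_i · s_i. Then (∏_{i} ct_i^{y_i}) · ct_0^{−sk} = g^{∑_i x_i · y_i}, i.e., the decryption expression of the single-input functional encryption scheme for inner products equals g raised to the inner product ⟨x, y⟩. -/

import Mathlib

/-! The decryptor's product collapses to a single power of `g` whose exponent is
`∑ᵢ yᵢ (r sᵢ + xᵢ) - r ⟨y, s⟩ = ⟨x, y⟩`: the key `sk = ⟨y, s⟩` cancels exactly the masks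
`hᵢ^r = g^{r sᵢ}` accumulated by the ciphertext. -/

open Finset

theorem Finset.prod_zpow_eq_zpow_sum {G ι : Type*} [CommGroup G] (s : Finset ι) (f : ι → ℤ)
    (a : G) : ∏ i ∈ s, a ^ f i = a ^ ∑ i ∈ s, f i :=
  cons_induction (by simp) (fun _ _ _ _ ↦ by simp [prod_cons, sum_cons, zpow_add, *]) s

theorem zpow_zpow_mul_zpow_zpow {G : Type*} [CommGroup G] (g : G) (s r x y : ℤ) :
    ((g ^ s) ^ r * g ^ x) ^ y = g ^ (r * (y * s) + x * y) := by
  rw [← zpow_mul, ← zpow_add, ← zpow_mul]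
  ring_nf

/-- Correctness of SI-FEIP decryption: with `hᵢ = g^{sᵢ}`, `ct₀ = g^r`,
`ctᵢ = hᵢ^r · g^{xᵢ}` and `sk = ∑ yᵢ·sᵢ`, the decryption expression
`(∏ ctᵢ^{yᵢ}) · ct₀^{−sk}` equals `g^{⟨x,y⟩}`. -/
theorem si_feip_decrypt_correct
    {G : Type*} [CommGroup G] (g : G) (η : ℕ)
    (s x y : Fin η → ℤ) (r : ℤ) :
    (∏ i, ((g ^ s i) ^ r * g ^ x i) ^ y i) * (g ^ r) ^ (-(∑ i, y i * s i)) =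
      g ^ (∑ i, x i * y i) := by
  simp only [zpow_zpow_mul_zpow_zpow]
  rw [prod_zpow_eq_zpow_sum, ← zpow_mul, ← zpow_add, sum_add_distrib, ← mul_sum]
  ring_nf
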